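/- The shadow sequence s(n) = a(n) − b(n) of Motzkin path counts satisfies the recurrence (n+2)·s(n) = (2n+1)·s(n-1) − 5(n-1)·s(n-2) for all n ≥ 2, with s(0) = s(1) = 1. -/

import Mathlib

inductive MStep where
  | U : MStep
  | D : MStep
  | H : MStep
deriving DecidableEq

/-- A word in {U,D,H} is a Motzkin path if #U = #D and no prefix has more D's than U's. -/
def IsMotzkin (w : List MStep) : Prop :=
  w.count MStep.U = w.count MStep.D ∧
  ∀ p : List MStep, p <+: w → p.count MStep.D ≤ p.count MStep.U

/-- Number of Motzkin paths of length n (the n-th Motzkin number). -/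
noncomputable def motzkinNum (n : ℕ) : ℕ :=
  Nat.card {w : List MStep // w.length = n ∧ IsMotzkin w}

/-- Number of Motzkin paths of length n with an even number of U steps. -/
noncomputable def evenMotzkin (n : ℕ) : ℕ :=
  Nat.card {w : List MStep // w.length = n ∧ IsMotzkin w ∧ Even (w.count MStep.U)}

/-- Number of Motzkin paths of length n with an odd number of U steps. -/
noncomputable def oddMotzkin (n : ℕ) : ℕ :=
  Nat.card {w : List MStep // w.length = n ∧ IsMotzkin w ∧ Odd (w.count MStep.U)}

/-- The shadow of the n-th Motzkin number: s(n) = a(n) - b(n). -/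
noncomputable def shadow (n : ℕ) : ℤ :=
  (evenMotzkin n : ℤ) - (oddMotzkin n : ℤ)

/-! Weighting each Motzkin path by `t ^ #U`, the first-return decomposition (a nonempty Motzkin
path is `H p` or `U p D q`) shows that the generating function `F` satisfies
`F = 1 + x F + t x² F²`. Eliminating `F²` between this equation and its derivative gives
the linear equation `x (1 - 2x + (1 - 4t) x²) F' + (2 - 3x + (1 - 4t) x²) F = 2`, whose
coefficients satisfy `(n + 2) f(n) = (2n + 1) f(n - 1) + (4t - 1)(n - 1) f(n - 2)`. The shadow is
the case `t = -1`. -/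

/-- Read as a lattice path, `w` leads from height `h` to height `0` without going below `0`. -/
def IsMotzkinFrom : ℕ → List MStep → Prop
  | h, [] => h = 0
  | h, .U :: w => IsMotzkinFrom (h + 1) w
  | 0, .D :: _ => False
  | h + 1, .D :: w => IsMotzkinFrom h w
  | h, .H :: w => IsMotzkinFrom h w

theorem List.forall_prefix_cons_iff {α : Type*} {a : α} {w : List α} {P : List α → Prop} :
    (∀ p, p <+: a :: w → P p) ↔ P [] ∧ ∀ p, p <+: w → P (a :: p) := by
  simp only [List.prefix_cons_iff, or_imp, forall_and, forall_eq, forall_exists_index, and_imp]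
  exact and_congr_right fun _ => ⟨fun h p hp => h _ p rfl hp, fun h _ p hq hp => hq ▸ h p hp⟩

theorem isMotzkinFrom_iff {h : ℕ} {w : List MStep} :
    IsMotzkinFrom h w ↔
      w.count .U + h = w.count .D ∧ ∀ p, p <+: w → p.count .D ≤ p.count .U + h := by
  induction w generalizing h with
  | nil => simp [IsMotzkinFrom]
  | cons a w ih =>
    rw [List.forall_prefix_cons_iff]
    cases a with
    | U => simp +arith [IsMotzkinFrom, ih]
    | H => simp [IsMotzkinFrom, ih]
    | D =>
      cases h with
      | zero => simpa [IsMotzkinFrom] using fun _ => ⟨[], List.nil_prefix, le_rfl⟩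
      | succ h => simp +arith [IsMotzkinFrom, ih]

theorem isMotzkin_iff_isMotzkinFrom_zero {w : List MStep} : IsMotzkin w ↔ IsMotzkinFrom 0 w := by
  simp [IsMotzkin, isMotzkinFrom_iff]

theorem IsMotzkinFrom.append {a b : ℕ} {u v : List MStep} (hu : IsMotzkinFrom a u)
    (hv : IsMotzkinFrom b v) : IsMotzkinFrom (a + b) (u ++ v) := by
  induction u generalizing a with
  | nil => simpa [show a = 0 from hu] using hv
  | cons x u ih =>
    cases x with
    | U => simpa [IsMotzkinFrom, Nat.add_right_comm] using ih hu
    | H => exact ih hu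
    | D =>
      cases a with
      | zero => exact hu.elim
      | succ a => simpa [IsMotzkinFrom, Nat.add_right_comm] using ih hu

/-- `u` is the part of `w` before it first reaches height `h`. -/
theorem IsMotzkinFrom.exists_eq_append_D_cons {a h : ℕ} {w : List MStep}
    (hw : IsMotzkinFrom (a + h + 1) w) :
    ∃ u v, w = u ++ .D :: v ∧ IsMotzkinFrom a u ∧ IsMotzkinFrom h v := by
  induction w generalizing a with
  | nil => exact absurd hw (by simp [IsMotzkinFrom])
  | cons x w ih =>
    cases x with
    | U =>
      obtain ⟨u, v, rfl, hu, hv⟩ :=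
        ih (a := a + 1) (by simpa [IsMotzkinFrom, Nat.add_right_comm] using hw)
      exact ⟨.U :: u, v, rfl, hu, hv⟩
    | H =>
      obtain ⟨u, v, rfl, hu, hv⟩ := ih hw
      exact ⟨.H :: u, v, rfl, hu, hv⟩
    | D =>
      cases a with
      | zero => exact ⟨[], w, rfl, rfl, by simpa [IsMotzkinFrom] using hw⟩
      | succ a =>
        obtain ⟨u, v, rfl, hu, hv⟩ :=
          ih (a := a) (by simpa [IsMotzkinFrom, Nat.add_right_comm] using hw)
        exact ⟨.D :: u, v, rfl, hu, hv⟩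

theorem IsMotzkinFrom.eq_of_append_D_cons_eq {h : ℕ} {u u' v v' : List MStep}
    (hu : IsMotzkinFrom h u) (hu' : IsMotzkinFrom h u') (huv : u ++ .D :: v = u' ++ .D :: v') :
    u = u' := by
  induction u generalizing h u' with
  | nil =>
    obtain rfl : h = 0 := hu
    cases u' with
    | nil => rfl
    | cons x u' =>
      obtain rfl : x = .D := (List.cons_eq_cons.mp huv).1.symm
      exact hu'.elim
  | cons x u ih =>
    cases u' with
    | nil =>
      obtain rfl : h = 0 := hu'
      obtain rfl : x = .D := (List.cons_eq_cons.mp huv).1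
      exact hu.elim
    | cons x' u' =>
      obtain ⟨rfl, htail⟩ := List.cons_eq_cons.mp huv
      congr 1
      cases x with
      | U => exact ih hu hu' htail
      | H => exact ih hu hu' htail
      | D =>
        cases h with
        | zero => exact hu.elim
        | succ h => exact ih hu hu' htail

section Counting

open Finset

instance : Fintype MStep := ⟨{.U, .D, .H}, fun x => by cases x <;> simp⟩

theorem finite_setOf_isMotzkinFrom_zero (n : ℕ) :
    {w : List MStep | w.length = n ∧ IsMotzkinFrom 0 w}.Finite :=
  (List.finite_length_eq MStep n).subset fun _ hw => hw.1

noncomputable def motzkinFinset (n : ℕ) : Finset (List MStep) :=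
  (finite_setOf_isMotzkinFrom_zero n).toFinset

@[simp]
theorem mem_motzkinFinset {n : ℕ} {w : List MStep} :
    w ∈ motzkinFinset n ↔ w.length = n ∧ IsMotzkinFrom 0 w :=
  Set.Finite.mem_toFinset _

theorem motzkinFinset_zero : motzkinFinset 0 = {[]} := by
  ext w
  cases w <;> simp [IsMotzkinFrom]

theorem motzkinFinset_one : motzkinFinset 1 = {[.H]} := by
  ext w
  rcases w with _ | ⟨_ | _ | _, _ | _⟩ <;> simp [IsMotzkinFrom]

theorem motzkinFinset_add_two (n : ℕ) :
    motzkinFinset (n + 2) = (motzkinFinset (n + 1)).image (.H :: ·) ∪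
      ((antidiagonal n).biUnion fun p => motzkinFinset p.1 ×ˢ motzkinFinset p.2).image
        fun q => .U :: (q.1 ++ .D :: q.2) := by
  ext w
  rcases w with _ | ⟨_ | _ | _, r⟩
  · simp
  · simp only [mem_motzkinFinset, List.length_cons, IsMotzkinFrom, mem_union, mem_image,
      mem_biUnion, HasAntidiagonal.mem_antidiagonal, mem_product, List.cons.injEq, Prod.exists,
      Nat.add_right_cancel_iff, zero_add, ↓existsAndEq, reduceCtorEq, and_true, and_false,
      true_and, false_or]
    constructor
    · rintro ⟨hr, hm⟩
      obtain ⟨u, v, rfl, hu, hv⟩ := IsMotzkinFrom.exists_eq_append_D_cons (a := 0) (h := 0) hm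
      exact ⟨u, v, ⟨by simp at hr; omega, hu, hv⟩, rfl⟩
    · rintro ⟨u, v, ⟨hl, hu, hv⟩, rfl⟩
      exact ⟨by simp; omega, hu.append (b := 1) hv⟩
  · simp [IsMotzkinFrom]
  · simp [IsMotzkinFrom]

theorem sum_motzkinFinset_add_two {M : Type*} [AddCommMonoid M] (f : List MStep → M) (n : ℕ) :
    ∑ w ∈ motzkinFinset (n + 2), f w = ∑ v ∈ motzkinFinset (n + 1), f (.H :: v) +
      ∑ p ∈ antidiagonal n, ∑ u ∈ motzkinFinset p.1, ∑ v ∈ motzkinFinset p.2,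
        f (.U :: (u ++ .D :: v)) := by
  have hdisj : ((antidiagonal n : Set (ℕ × ℕ))).PairwiseDisjoint
      fun p => motzkinFinset p.1 ×ˢ motzkinFinset p.2 := by
    intro p _ q _ hpq
    simp only [Function.onFun, disjoint_left, mem_product, mem_motzkinFinset]
    rintro ⟨u, v⟩ ⟨⟨hu, -⟩, hv, -⟩ ⟨⟨hu', -⟩, hv', -⟩
    exact hpq (Prod.ext (hu.symm.trans hu') (hv.symm.trans hv'))
  rw [motzkinFinset_add_two, sum_union, sum_image, sum_image, sum_biUnion hdisj]
  · simp_rw [sum_product]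
  · rintro ⟨u, v⟩ huv ⟨u', v'⟩ huv' h
    simp only [coe_biUnion, Set.mem_iUnion, mem_coe, mem_product, mem_motzkinFinset] at huv huv'
    obtain ⟨-, -, ⟨-, hu⟩, -⟩ := huv
    obtain ⟨-, -, ⟨-, hu'⟩, -⟩ := huv'
    have htail := List.cons_injective h
    obtain rfl := hu.eq_of_append_D_cons_eq hu' htail
    obtain rfl : v = v' := by simpa using htail
    rfl
  · exact fun _ _ _ _ h => List.cons_injective h
  · simp only [disjoint_left, mem_image]
    rintro _ ⟨v, -, rfl⟩ ⟨q, -, h⟩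
    cases h

variable {R : Type*} [CommSemiring R]

noncomputable def motzkinWeight (t : R) (n : ℕ) : R :=
  ∑ w ∈ motzkinFinset n, t ^ w.count .U

theorem motzkinWeight_zero (t : R) : motzkinWeight t 0 = 1 := by
  simp [motzkinWeight, motzkinFinset_zero]

theorem motzkinWeight_one (t : R) : motzkinWeight t 1 = 1 := by
  simp [motzkinWeight, motzkinFinset_one]

theorem motzkinWeight_add_two (t : R) (n : ℕ) :
    motzkinWeight t (n + 2) = motzkinWeight t (n + 1) +
      t * ∑ p ∈ antidiagonal n, motzkinWeight t p.1 * motzkinWeight t p.2 := by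
  rw [motzkinWeight, sum_motzkinFinset_add_two, mul_sum]
  congr 1
  refine sum_congr rfl fun p _ => ?_
  rw [motzkinWeight, motzkinWeight, sum_mul_sum, mul_sum]
  refine sum_congr rfl fun u _ => ?_
  rw [mul_sum]
  refine sum_congr rfl fun v _ => ?_
  simp [pow_succ, pow_add]
  ring

theorem natCard_isMotzkin_and (n : ℕ) (P : List MStep → Prop) [DecidablePred P] :
    Nat.card {w : List MStep // w.length = n ∧ IsMotzkin w ∧ P w}
      = #((motzkinFinset n).filter P) := by
  rw [← Nat.card_eq_finsetCard]
  exact Nat.card_congr <| Equiv.subtypeEquivRight fun w => by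
    simp [isMotzkin_iff_isMotzkinFrom_zero, and_assoc]

end Counting

theorem shadow_eq_motzkinWeight (n : ℕ) : shadow n = motzkinWeight (-1) n := by
  simp only [motzkinWeight, neg_one_pow_eq_ite, Finset.sum_ite, Finset.sum_const, smul_neg,
    nsmul_one, Nat.not_even_iff_odd, shadow, evenMotzkin, oddMotzkin, natCard_isMotzkin_and]
  ring

section GeneratingFunction

open PowerSeries

theorem mk_motzkinWeight {R : Type*} [CommSemiring R] (t : R) :
    mk (motzkinWeight t)
      = 1 + X * mk (motzkinWeight t) + C t * X ^ 2 * mk (motzkinWeight t) ^ 2 := by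
  ext n
  match n with
  | 0 => simp [motzkinWeight_zero]
  | 1 => simp [motzkinWeight_zero, motzkinWeight_one, mul_assoc, coeff_X_pow_mul']
  | n + 2 =>
    rw [map_add, map_add, coeff_one, if_neg (by omega), mul_assoc, coeff_C_mul, coeff_X_pow_mul,
      coeff_succ_X_mul, sq, coeff_mul]
    simp [motzkinWeight_add_two]

variable {R : Type*} [CommRing R]

theorem coeff_X_mul_derivative (f : R⟦X⟧) (n : ℕ) :
    coeff n (X * d⁄dX R f) = n * coeff n f := by
  cases n with
  | zero => simp
  | succ n => rw [coeff_succ_X_mul, coeff_derivative, mul_comm]; push_cast; ring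

theorem motzkin_ode_of_functional_eq (t : R) {F : R⟦X⟧}
    (hF : F = 1 + X * F + C t * X ^ 2 * F ^ 2) :
    X * (1 - 2 * X + C (1 - 4 * t) * X ^ 2) * d⁄dX R F
      + (2 - 3 * X + C (1 - 4 * t) * X ^ 2) * F = 2 := by
  have hF' := congrArg (d⁄dX R) hF
  simp only [map_add, Derivation.leibniz, Derivation.leibniz_pow, derivative_X, derivative_C,
    Derivation.map_one_eq_zero, smul_eq_mul] at hF'
  simp only [map_sub, map_one, map_mul, map_ofNat]
  linear_combination (2 + 4 * C t * X ^ 2 * F + 4 * C t * X ^ 3 * d⁄dX R F) * hF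
    + (X - X ^ 2 - 2 * C t * X ^ 3 * F) * hF'

theorem motzkin_recurrence_of_functional_eq (t : R) {F : R⟦X⟧}
    (hF : F = 1 + X * F + C t * X ^ 2 * F ^ 2) (m : ℕ) :
    (m + 4 : R) * coeff (m + 2) F
      = (2 * m + 5) * coeff (m + 1) F + (4 * t - 1) * (m + 1) * coeff m F := by
  -- `X F'` is kept whole: its coefficients are `n f(n)` for every `n`, with no index shift.
  have h : X * d⁄dX R F - 2 • (X * (X * d⁄dX R F))
      + (1 - 4 * t) • (X ^ 2 * (X * d⁄dX R F)) + 2 • F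
      - 3 • (X * F) + (1 - 4 * t) • (X ^ 2 * F) = 2 := by
    simp only [nsmul_eq_mul, smul_eq_C_mul]
    push_cast
    linear_combination motzkin_ode_of_functional_eq t hF
  have hD := coeff_X_mul_derivative F
  generalize X * d⁄dX R F = D at h hD
  have hc := congrArg (coeff (m + 2)) h
  simp only [map_add, map_sub, map_nsmul, map_smul, coeff_X_pow_mul] at hc
  simp only [show m + 2 = m + 1 + 1 from rfl, coeff_succ_X_mul, hD, smul_eq_mul, nsmul_eq_mul] at hc
  rw [← map_ofNat C 2, coeff_C, if_neg (by omega)] at hc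
  push_cast at hc
  linear_combination hc

end GeneratingFunction

theorem stmt_11 :
    shadow 0 = 1 ∧ shadow 1 = 1 ∧
    ∀ n : ℕ, 2 ≤ n →
      ((n : ℤ) + 2) * shadow n =
        (2 * (n : ℤ) + 1) * shadow (n - 1) - 5 * ((n : ℤ) - 1) * shadow (n - 2) := by
  refine ⟨by rw [shadow_eq_motzkinWeight, motzkinWeight_zero],
    by rw [shadow_eq_motzkinWeight, motzkinWeight_one], fun n hn => ?_⟩
  obtain ⟨m, rfl⟩ := Nat.exists_eq_add_of_le' hn
  have hrec := motzkin_recurrence_of_functional_eq (-1 : ℤ) (mk_motzkinWeight (-1)) m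
  simp only [PowerSeries.coeff_mk, ← shadow_eq_motzkinWeight] at hrec
  simp only [Nat.add_sub_cancel, show m + 2 - 1 = m + 1 by omega]
  push_cast
  linear_combination hrec
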